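/- arXiv:1302.2400 — 4 statements merged into one kernel-verified Lean document; each statement's English description precedes it below -/
import Mathlib

section
/- Let U be a normed space, let β, ν ∈ (0,1) and C > 0, and let ω : ℝ → U be continuous with ‖ω‖_{β,0,n} < ∞ for every n ∈ ℕ. Define the sequence of times T_0(ω) = 0 and, for i ≥ 1, T_i(ω) = T_{i−1}(ω) + T(θ_{T_{i−1}(ω)} ω). Then for every t > 0 there exists i ∈ ℕ such that T_i(ω) ≥ t. -/
/-- The `β`-Hölder seminorm of `ω : ℝ → U` on the interval `[a,b]`:
`sSup { ‖ω t − ω s‖ / (t−s)^β : a ≤ s < t ≤ b }`. -/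
noncomputable def holderNorm {U : Type*} [NormedAddCommGroup U] (β a b : ℝ) (ω : ℝ → U) : ℝ :=
  sSup {x : ℝ | ∃ s t : ℝ, a ≤ s ∧ s < t ∧ t ≤ b ∧ x = ‖ω t - ω s‖ / (t - s) ^ β}

/-- The Wiener shift `(θ_τ ω)(s) = ω(s+τ) − ω(τ)`. -/
def wienerShift {U : Type*} [NormedAddCommGroup U] (τ : ℝ) (ω : ℝ → U) : ℝ → U :=
  fun s => ω (s + τ) - ω τ

/-- `T(ω) = inf { T > 0 : C T + C (T^β + T^{1+β} + T^{β+ν}) ‖ω‖_{β,0,T} ≥ 1/2 }`. -/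
noncomputable def TTime {U : Type*} [NormedAddCommGroup U] (C β ν : ℝ) (ω : ℝ → U) : ℝ :=
  sInf {T : ℝ | 0 < T ∧
    1 / 2 ≤ C * T + C * (T ^ β + T ^ (1 + β) + T ^ (β + ν)) * holderNorm β 0 T ω}

/-! A finite Hölder bound `B` on `[0, t + 1]` makes the stopping functional at every shift
`τ ∈ [0, t]` at most `C T + C (T^β + T^{1+β} + T^{β+ν}) B`, which tends to `0` as `T → 0`.
Hence the waiting times `T(θ_τ ω)` are bounded below by a uniform `ε > 0` as long as
`T_i(ω) ≤ t`, and `T_i(ω)` cannot stay below `t` forever. -/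

open Set

section Holder

variable {U : Type*} [NormedAddCommGroup U]

def holderQuotients (β a b : ℝ) (ω : ℝ → U) : Set ℝ :=
  {x : ℝ | ∃ s t : ℝ, a ≤ s ∧ s < t ∧ t ≤ b ∧ x = ‖ω t - ω s‖ / (t - s) ^ β}

theorem holderQuotients_mono {β a a' b b' : ℝ} {ω : ℝ → U} (ha : a' ≤ a) (hb : b ≤ b') :
    holderQuotients β a b ω ⊆ holderQuotients β a' b' ω := by
  rintro x ⟨s, t, hs, hst, ht, rfl⟩
  exact ⟨s, t, ha.trans hs, hst, ht.trans hb, rfl⟩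

theorem holderQuotients_wienerShift_subset (β a b τ : ℝ) (ω : ℝ → U) :
    holderQuotients β a b (wienerShift τ ω) ⊆ holderQuotients β (a + τ) (b + τ) ω := by
  rintro x ⟨s, t, hs, hst, ht, rfl⟩
  refine ⟨s + τ, t + τ, by linarith, by linarith, by linarith, ?_⟩
  simp only [wienerShift, sub_sub_sub_cancel_right, add_sub_add_right_eq_sub]

theorem holderNorm_nonneg (β a b : ℝ) (ω : ℝ → U) : 0 ≤ holderNorm β a b ω := by
  refine Real.sSup_nonneg ?_
  rintro x ⟨s, t, -, hst, -, rfl⟩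
  have : 0 ≤ (t - s) ^ β := Real.rpow_nonneg (sub_nonneg.2 hst.le) β
  positivity

end Holder

section StoppingTime

variable {U : Type*} [NormedAddCommGroup U] {C β ν : ℝ}

/-- `h` stands for `‖ω‖_{β,0,T}`. -/
noncomputable def stoppingFunctional (C β ν T h : ℝ) : ℝ :=
  C * T + C * (T ^ β + T ^ (1 + β) + T ^ (β + ν)) * h

theorem TTime_eq_sInf (C β ν : ℝ) (ω : ℝ → U) :
    TTime C β ν ω =
      sInf {T : ℝ | 0 < T ∧ 1 / 2 ≤ stoppingFunctional C β ν T (holderNorm β 0 T ω)} :=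
  rfl

theorem stoppingFunctional_mono (hC : 0 ≤ C) {T : ℝ} (hT : 0 ≤ T) {h h' : ℝ} (hh : h ≤ h') :
    stoppingFunctional C β ν T h ≤ stoppingFunctional C β ν T h' := by
  unfold stoppingFunctional
  have : 0 ≤ T ^ β + T ^ (1 + β) + T ^ (β + ν) := by
    have := Real.rpow_nonneg hT β
    have := Real.rpow_nonneg hT (1 + β)
    have := Real.rpow_nonneg hT (β + ν)
    positivity
  gcongr

theorem eventually_stoppingFunctional_lt_half (hβ : 0 < β) (hν : 0 < ν) (C h : ℝ) :
    ∀ᶠ T in nhds 0, stoppingFunctional C β ν T h < 1 / 2 := by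
  have hcont : ContinuousAt (fun T => stoppingFunctional C β ν T h) 0 := by
    have hrpow (q : ℝ) (hq : 0 < q) : ContinuousAt (fun T : ℝ => T ^ q) 0 :=
      Real.continuousAt_rpow_const 0 q (Or.inr hq.le)
    unfold stoppingFunctional
    have := hrpow β hβ
    have := hrpow (1 + β) (by linarith)
    have := hrpow (β + ν) (by linarith)
    fun_prop
  have hzero : stoppingFunctional C β ν 0 h = 0 := by
    simp [stoppingFunctional, Real.zero_rpow hβ.ne', Real.zero_rpow (by linarith : 1 + β ≠ 0),
      Real.zero_rpow (by linarith : β + ν ≠ 0)]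
  exact hcont.tendsto.eventually_lt_const (by rw [hzero]; norm_num)

theorem TTime_nonneg (C β ν : ℝ) (ω : ℝ → U) : 0 ≤ TTime C β ν ω :=
  Real.sInf_nonneg fun _ hT => hT.1.le

theorem le_TTime_of_forall_lt_half (hC : 0 < C) {ε : ℝ} {ω : ℝ → U}
    (hsmall : ∀ T, 0 < T → T < ε → stoppingFunctional C β ν T (holderNorm β 0 T ω) < 1 / 2) :
    ε ≤ TTime C β ν ω := by
  rw [TTime_eq_sInf]
  -- Nonemptiness matters, as `sInf ∅ = 0`; `T = 1/(2C)` lies in the set.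
  refine le_csInf ⟨1 / (2 * C), by positivity, ?_⟩ fun T ⟨hT, hhalf⟩ => ?_
  · calc (1 : ℝ) / 2 = stoppingFunctional C β ν (1 / (2 * C)) 0 := by
          simp [stoppingFunctional]; field_simp
      _ ≤ _ := stoppingFunctional_mono hC.le (by positivity) (holderNorm_nonneg _ _ _ _)
  · by_contra! hlt
    exact (hsmall T hT hlt).not_ge hhalf

theorem exists_pos_le_TTime_wienerShift (hβ : 0 < β) (hν : 0 < ν) (hC : 0 < C) {t : ℝ}
    {ω : ℝ → U} (hbdd : BddAbove (holderQuotients β 0 (t + 1) ω)) :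
    ∃ ε > 0, ∀ τ ∈ Icc 0 t, ε ≤ TTime C β ν (wienerShift τ ω) := by
  obtain ⟨B, hB⟩ := hbdd
  obtain ⟨δ, hδ, hsmall⟩ :=
    Metric.eventually_nhds_iff.1 (eventually_stoppingFunctional_lt_half hβ hν C (max B 0))
  refine ⟨min δ 1, lt_min hδ one_pos, fun τ ⟨hτ0, hτt⟩ => le_TTime_of_forall_lt_half hC ?_⟩
  intro T hT hTε
  have hnorm : holderNorm β 0 T (wienerShift τ ω) ≤ max B 0 := by
    refine Real.sSup_le (fun x hx => le_max_of_le_left (hB ?_)) (le_max_right _ _)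
    have hx' := holderQuotients_wienerShift_subset β 0 T τ ω hx
    rw [zero_add] at hx'
    exact holderQuotients_mono hτ0 (by linarith [min_le_right δ 1]) hx'
  have hTδ : dist T 0 < δ := by
    rw [Real.dist_eq, sub_zero, abs_of_pos hT]
    exact hTε.trans_le (min_le_left _ _)
  exact (stoppingFunctional_mono hC.le hT.le hnorm).trans_lt (hsmall hTδ)

end StoppingTime

theorem exists_le_of_lt_imp_add_le {s : ℕ → ℝ} {ε t : ℝ} (hε : 0 < ε)
    (hstep : ∀ i, s i < t → s i + ε ≤ s (i + 1)) : ∃ i, t ≤ s i := by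
  by_contra! hlt
  have hgrowth : ∀ i : ℕ, s 0 + i * ε ≤ s i := by
    intro i
    induction i with
    | zero => simp
    | succ i ih => push_cast; linarith [hstep i (hlt i)]
  obtain ⟨i, hi⟩ := exists_nat_gt ((t - s 0) / ε)
  rw [div_lt_iff₀ hε] at hi
  linarith [hgrowth i, hlt i]

theorem stopping_times_tend_to_infinity_general
    {U : Type*} [NormedAddCommGroup U]
    (β ν C : ℝ) (hβ : β ∈ Set.Ioo (0 : ℝ) 1) (hν : ν ∈ Set.Ioo (0 : ℝ) 1) (hC : 0 < C)
    (ω : ℝ → U)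
    (hfin : ∀ n : ℕ,
      BddAbove {x : ℝ | ∃ s t : ℝ, 0 ≤ s ∧ s < t ∧ t ≤ (n : ℝ) ∧
        x = ‖ω t - ω s‖ / (t - s) ^ β})
    (Tseq : ℕ → ℝ) (h0 : Tseq 0 = 0)
    (hrec : ∀ i : ℕ, Tseq (i + 1) = Tseq i + TTime C β ν (wienerShift (Tseq i) ω)) :
    ∀ t : ℝ, 0 < t → ∃ i : ℕ, t ≤ Tseq i := by
  intro t _
  obtain ⟨n, hn⟩ := exists_nat_ge (t + 1)
  obtain ⟨ε, hε, hwait⟩ := exists_pos_le_TTime_wienerShift (C := C) (ν := ν) hβ.1 hν.1 hC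
    ((hfin n).mono (holderQuotients_mono le_rfl hn))
  have hnonneg : ∀ i, 0 ≤ Tseq i := by
    intro i
    induction i with
    | zero => exact h0.ge
    | succ i ih => rw [hrec]; linarith [TTime_nonneg C β ν (wienerShift (Tseq i) ω)]
  refine exists_le_of_lt_imp_add_le hε fun i hi => ?_
  rw [hrec]
  linarith [hwait (Tseq i) ⟨hnonneg i, hi.le⟩]

/-- With `T_0(ω) = 0` and `T_i(ω) = T_{i−1}(ω) + T(θ_{T_{i−1}(ω)} ω)`, for every `t > 0`
there is `i ∈ ℕ` with `T_i(ω) ≥ t`. -/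
theorem stopping_times_tend_to_infinity
    {U : Type*} [NormedAddCommGroup U] [NormedSpace ℝ U]
    (β ν C : ℝ) (hβ : β ∈ Set.Ioo (0 : ℝ) 1) (hν : ν ∈ Set.Ioo (0 : ℝ) 1) (hC : 0 < C)
    (ω : ℝ → U) (hcont : Continuous ω)
    (hfin : ∀ n : ℕ,
      BddAbove {x : ℝ | ∃ s t : ℝ, 0 ≤ s ∧ s < t ∧ t ≤ (n : ℝ) ∧
        x = ‖ω t - ω s‖ / (t - s) ^ β})
    (Tseq : ℕ → ℝ) (h0 : Tseq 0 = 0)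
    (hrec : ∀ i : ℕ, Tseq (i + 1) = Tseq i + TTime C β ν (wienerShift (Tseq i) ω)) :
    ∀ t : ℝ, 0 < t → ∃ i : ℕ, t ≤ Tseq i :=
  stopping_times_tend_to_infinity_general β ν C hβ hν hC ω hfin Tseq h0 hrec
end

section
/- Let U be a normed space, μ > 0, and let ω : ℝ → U be a function with ω(0) = 0. Then for every n ∈ ℕ, sup_{s ∈ [−μ,0]} ‖ω(−nμ + s)‖ ≤ 3 ∑_{i=0}^{n} sup_{s ∈ [−μ,0]} ‖(θ_{−iμ} ω)(s)‖ + sup_{s ∈ [−μ,0]} ‖ω(s)‖. -/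
open scoped ENNReal

/-! Since `ω 0 = 0`, the point `-nμ` is reached from `0` in `n` steps of length `μ`, each of which
is an increment `(θ_{-kμ} ω)(-μ)` controlled by the `k`-th window; the remaining offset
`s ∈ [-μ, 0]` is the increment `(θ_{-nμ} ω)(s)`. So the bound holds with constant `1` and
without the last term. -/

/-- The paper's `‖f_0‖_μ`. -/
noncomputable def windowSup {U : Type*} [NormedAddCommGroup U] (μ : ℝ) (f : ℝ → U) : ℝ≥0∞ :=
  ⨆ s ∈ Set.Icc (-μ) (0 : ℝ), (‖f s‖₊ : ℝ≥0∞)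

section

variable {U : Type*} [NormedAddCommGroup U]

theorem le_windowSup {μ s : ℝ} (f : ℝ → U) (hs : s ∈ Set.Icc (-μ) 0) :
    (‖f s‖₊ : ℝ≥0∞) ≤ windowSup μ f :=
  le_iSup₂ (f := fun s (_ : s ∈ Set.Icc (-μ) (0 : ℝ)) => (‖f s‖₊ : ℝ≥0∞)) s hs

theorem apply_add_eq_wienerShift_add (ω : ℝ → U) (τ s : ℝ) :
    ω (s + τ) = wienerShift τ ω s + ω τ :=
  (sub_add_cancel _ _).symm

theorem sub_eq_sum_wienerShift (ω : ℝ → U) (μ : ℝ) (n : ℕ) :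
    ω (-(n : ℝ) * μ) - ω 0 = ∑ k ∈ Finset.range n, wienerShift (-(k : ℝ) * μ) ω (-μ) := by
  have step (k : ℕ) :
      wienerShift (-(k : ℝ) * μ) ω (-μ) = ω (-((k + 1 : ℕ) : ℝ) * μ) - ω (-(k : ℝ) * μ) := by
    simp only [wienerShift, Nat.cast_succ]
    ring_nf
  rw [Finset.sum_congr rfl fun k _ => step k, Finset.sum_range_sub (fun k : ℕ => ω (-(k : ℝ) * μ)) n]
  simp

theorem windowSup_shift_le_sum (ω : ℝ → U) (h0 : ω 0 = 0) (μ : ℝ) (n : ℕ) :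
    windowSup μ (fun s => ω (-(n : ℝ) * μ + s)) ≤
      ∑ i ∈ Finset.range (n + 1), windowSup μ (wienerShift (-(i : ℝ) * μ) ω) := by
  refine iSup₂_le fun s hs => ?_
  have left_mem : -μ ∈ Set.Icc (-μ) (0 : ℝ) := ⟨le_rfl, hs.1.trans hs.2⟩
  have endpoint : (‖ω (-(n : ℝ) * μ)‖₊ : ℝ≥0∞) ≤
      ∑ k ∈ Finset.range n, windowSup μ (wienerShift (-(k : ℝ) * μ) ω) := by
    rw [← sub_zero (ω _), ← h0, sub_eq_sum_wienerShift]
    calc (‖∑ k ∈ Finset.range n, wienerShift (-(k : ℝ) * μ) ω (-μ)‖₊ : ℝ≥0∞)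
        ≤ ∑ k ∈ Finset.range n, (‖wienerShift (-(k : ℝ) * μ) ω (-μ)‖₊ : ℝ≥0∞) := by
          exact_mod_cast nnnorm_sum_le _ _
      _ ≤ _ := Finset.sum_le_sum fun k _ => le_windowSup _ left_mem
  calc (‖ω (-(n : ℝ) * μ + s)‖₊ : ℝ≥0∞)
      ≤ ‖wienerShift (-(n : ℝ) * μ) ω s‖₊ + ‖ω (-(n : ℝ) * μ)‖₊ := by
        rw [add_comm, apply_add_eq_wienerShift_add ω]
        exact_mod_cast nnnorm_add_le _ _
    _ ≤ windowSup μ (wienerShift (-(n : ℝ) * μ) ω) +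
          ∑ k ∈ Finset.range n, windowSup μ (wienerShift (-(k : ℝ) * μ) ω) :=
        add_le_add (le_windowSup _ hs) endpoint
    _ = _ := by rw [Finset.sum_range_succ, add_comm]

end

theorem sup_shift_estimate_general
    {U : Type*} [NormedAddCommGroup U]
    (μ : ℝ) (ω : ℝ → U) (h0 : ω 0 = 0) (n : ℕ) :
    (⨆ s ∈ Set.Icc (-μ) (0 : ℝ), (‖ω (-(n : ℝ) * μ + s)‖₊ : ℝ≥0∞)) ≤
      3 * ∑ i ∈ Finset.range (n + 1),
            ⨆ s ∈ Set.Icc (-μ) (0 : ℝ), (‖wienerShift (-(i : ℝ) * μ) ω s‖₊ : ℝ≥0∞)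
        + ⨆ s ∈ Set.Icc (-μ) (0 : ℝ), (‖ω s‖₊ : ℝ≥0∞) :=
  calc _ ≤ ∑ i ∈ Finset.range (n + 1), windowSup μ (wienerShift (-(i : ℝ) * μ) ω) :=
        windowSup_shift_le_sum ω h0 μ n
    _ ≤ _ := Finset.sum_le_sum fun i _ => iSup₂_mono fun s _ => le_self_add
    _ ≤ _ := le_mul_of_one_le_left zero_le (by norm_num)

/-- For every `n ∈ ℕ`,
`sup_{s∈[−μ,0]} ‖ω(−nμ+s)‖ ≤ 3 ∑_{i=0}^{n} sup_{s∈[−μ,0]} ‖(θ_{−iμ}ω)(s)‖ + sup_{s∈[−μ,0]} ‖ω(s)‖`. -/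
theorem sup_shift_estimate
    {U : Type*} [NormedAddCommGroup U] [NormedSpace ℝ U]
    (μ : ℝ) (hμ : 0 < μ) (ω : ℝ → U) (h0 : ω 0 = 0) (n : ℕ) :
    (⨆ s ∈ Set.Icc (-μ) (0 : ℝ), (‖ω (-(n : ℝ) * μ + s)‖₊ : ℝ≥0∞)) ≤
      3 * ∑ i ∈ Finset.range (n + 1),
            ⨆ s ∈ Set.Icc (-μ) (0 : ℝ), (‖wienerShift (-(i : ℝ) * μ) ω s‖₊ : ℝ≥0∞)
        + ⨆ s ∈ Set.Icc (-μ) (0 : ℝ), (‖ω s‖₊ : ℝ≥0∞) :=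
  sup_shift_estimate_general μ ω h0 n
end

section
/- Let U be a normed space, μ > 0, and let ω : ℝ → U be continuous with ω(0) = 0. Assume that for every ε > 0 there exists C₀ ≥ 0 such that sup_{s ∈ [−μ,0]} ‖(θ_{−iμ} ω)(s)‖ ≤ C₀ + ε i for all i ∈ ℕ. Then for every κ > 0, lim_{r → ∞} e^{−κ r} · sup_{s ∈ [−μ,0]} ‖ω(−r + s)‖ = 0; that is, r ↦ ‖ω_{−r}‖_μ grows subexponentially. -/
/-!
Taking `ε = 1`, the increments of `ω` over the windows `[-(n+1)μ, -nμ]` are at most `C + n`,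
so telescoping bounds `‖ω‖` on `[-nμ, 0]` by `‖ω 0‖ + n (C + n)`.
Hence `‖ω_{-r}‖_μ = O(r²)`, and polynomial growth is killed by `e^{-κ r}`.
-/

open Filter

open Asymptotics Set

lemma tendsto_exp_neg_mul_mul_of_isBigO_pow {g : ℝ → ℝ} {k : ℕ} {κ : ℝ} (hκ : 0 < κ)
    (hg : g =O[atTop] fun r => r ^ k) :
    Tendsto (fun r => Real.exp (-κ * r) * g r) atTop (nhds 0) := by
  convert (hg.trans_isLittleO (isLittleO_pow_exp_pos_mul_atTop k hκ)).tendsto_div_nhds_zero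
    using 2 with r
  rw [neg_mul, Real.exp_neg, inv_mul_eq_div]

section WindowBounds

variable {E : Type*} [NormedAddCommGroup E] {ω : ℝ → E} {μ C : ℝ}

lemma norm_le_of_norm_wienerShift_le (hμ : 0 ≤ μ) (hC : 0 ≤ C)
    (hinc : ∀ n : ℕ, ∀ s ∈ Icc (-μ) 0, ‖wienerShift (-(n : ℝ) * μ) ω s‖ ≤ C + n) (n : ℕ) :
    ∀ x ∈ Icc (-(n : ℝ) * μ) 0, ‖ω x‖ ≤ ‖ω 0‖ + n * (C + n) := by
  induction n with
  | zero =>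
    intro x hx
    obtain rfl : x = 0 := by simpa using hx
    simp
  | succ n ih =>
    intro x ⟨hx_lo, hx_hi⟩
    push_cast at hx_lo ⊢
    have hstep : (n : ℝ) * (C + n) ≤ (n + 1) * (C + (n + 1)) := by nlinarith
    rcases le_or_gt (-(n : ℝ) * μ) x with hx | hx
    · exact (ih x ⟨hx, hx_hi⟩).trans (by linarith)
    · have hs : x + n * μ ∈ Icc (-μ) 0 := ⟨by linarith, by linarith⟩
      have hsplit : ω x = wienerShift (-(n : ℝ) * μ) ω (x + n * μ) + ω (-(n : ℝ) * μ) := by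
        simp [wienerShift]
      calc ‖ω x‖ ≤ (C + n) + (‖ω 0‖ + n * (C + n)) := by
            rw [hsplit]
            exact (norm_add_le _ _).trans
              (add_le_add (hinc n _ hs) (ih _ ⟨le_rfl, by nlinarith⟩))
        _ ≤ ‖ω 0‖ + (n + 1) * (C + (n + 1)) := by linarith

lemma sSup_norm_window_le (hμ : 0 < μ) (hC : 0 ≤ C)
    (hinc : ∀ n : ℕ, ∀ s ∈ Icc (-μ) 0, ‖wienerShift (-(n : ℝ) * μ) ω s‖ ≤ C + n)
    {r : ℝ} (hr : 0 ≤ r) :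
    sSup ((fun s => ‖ω (-r + s)‖) '' Icc (-μ) 0) ≤ ‖ω 0‖ + (r / μ + 2) * (C + (r / μ + 2)) := by
  have hrμ : 0 ≤ r / μ := div_nonneg hr hμ.le
  refine Real.sSup_le ?_ (by positivity)
  rintro _ ⟨s, ⟨hs_lo, hs_hi⟩, rfl⟩
  set n := ⌈r / μ⌉₊ + 1
  have hn_le : (n : ℝ) ≤ r / μ + 2 := by
    have := Nat.ceil_lt_add_one hrμ
    push_cast [n]
    linarith
  have hn_ge : r + μ ≤ n * μ := by
    have := (div_le_iff₀ hμ).1 (Nat.le_ceil (r / μ))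
    push_cast [n]
    linarith
  calc ‖ω (-r + s)‖ ≤ ‖ω 0‖ + n * (C + n) :=
        norm_le_of_norm_wienerShift_le hμ.le hC hinc n _ ⟨by linarith, by linarith⟩
    _ ≤ ‖ω 0‖ + (r / μ + 2) * (C + (r / μ + 2)) := by gcongr

lemma isBigO_sSup_norm_window_sq (hμ : 0 < μ) (hC : 0 ≤ C)
    (hinc : ∀ n : ℕ, ∀ s ∈ Icc (-μ) 0, ‖wienerShift (-(n : ℝ) * μ) ω s‖ ≤ C + n) :
    (fun r => sSup ((fun s => ‖ω (-r + s)‖) '' Icc (-μ) 0)) =O[atTop] fun r => r ^ 2 := by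
  refine IsBigO.of_bound (‖ω 0‖ + (1 / μ + 2) * (C + (1 / μ + 2))) ?_
  filter_upwards [eventually_ge_atTop 1] with r hr
  have hsup_nonneg : 0 ≤ sSup ((fun s => ‖ω (-r + s)‖) '' Icc (-μ) 0) :=
    Real.sSup_nonneg (by rintro _ ⟨s, -, rfl⟩; positivity)
  have hlin : r / μ + 2 ≤ (1 / μ + 2) * r := by
    rw [add_mul, one_div_mul_eq_div]
    linarith
  rw [Real.norm_of_nonneg hsup_nonneg, Real.norm_of_nonneg (by positivity)]
  calc sSup ((fun s => ‖ω (-r + s)‖) '' Icc (-μ) 0)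
      ≤ ‖ω 0‖ + (r / μ + 2) * (C + (r / μ + 2)) := sSup_norm_window_le hμ hC hinc (by linarith)
    _ ≤ ‖ω 0‖ * r ^ 2 + ((1 / μ + 2) * r) * ((C + (1 / μ + 2)) * r) := by
        gcongr ?_ + ?_ * ?_
        · exact le_mul_of_one_le_right (norm_nonneg _) (one_le_pow₀ hr)
        · nlinarith
    _ = (‖ω 0‖ + (1 / μ + 2) * (C + (1 / μ + 2))) * r ^ 2 := by ring

end WindowBounds

theorem subexponential_growth_of_sublinear_shifts_general
    {U : Type*} [NormedAddCommGroup U]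
    (μ : ℝ) (hμ : 0 < μ) (ω : ℝ → U) (hcont : Continuous ω)
    (hsub : ∀ ε > (0 : ℝ), ∃ C₀ ≥ (0 : ℝ), ∀ i : ℕ,
      sSup ((fun s => ‖wienerShift (-(i : ℝ) * μ) ω s‖) '' Set.Icc (-μ) 0) ≤ C₀ + ε * i) :
    ∀ κ > (0 : ℝ),
      Tendsto (fun r : ℝ =>
          Real.exp (-κ * r) * sSup ((fun s => ‖ω (-r + s)‖) '' Set.Icc (-μ) 0))
        atTop (nhds 0) := by
  intro κ hκ
  obtain ⟨C, hC, hsupC⟩ := hsub 1 one_pos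
  have hinc : ∀ n : ℕ, ∀ s ∈ Icc (-μ) 0, ‖wienerShift (-(n : ℝ) * μ) ω s‖ ≤ C + n := by
    intro n s hs
    have hshift : Continuous (wienerShift (-(n : ℝ) * μ) ω) := by unfold wienerShift; fun_prop
    have hbdd := ((isCompact_Icc (a := -μ) (b := 0)).image hshift.norm).bddAbove
    simpa using (le_csSup hbdd (mem_image_of_mem _ hs)).trans (hsupC n)
  exact tendsto_exp_neg_mul_mul_of_isBigO_pow hκ (isBigO_sSup_norm_window_sq hμ hC hinc)

/-- If `sup_{s∈[−μ,0]} ‖(θ_{−iμ}ω)(s)‖` grows sublinearly in `i`, then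
`r ↦ sup_{s∈[−μ,0]} ‖ω(−r+s)‖` grows subexponentially, i.e.
`e^{−κ r} sup_{s∈[−μ,0]} ‖ω(−r+s)‖ → 0` as `r → ∞`, for every `κ > 0`. -/
theorem subexponential_growth_of_sublinear_shifts
    {U : Type*} [NormedAddCommGroup U] [NormedSpace ℝ U]
    (μ : ℝ) (hμ : 0 < μ) (ω : ℝ → U) (hcont : Continuous ω) (h0 : ω 0 = 0)
    (hsub : ∀ ε > (0 : ℝ), ∃ C₀ ≥ (0 : ℝ), ∀ i : ℕ,
      sSup ((fun s => ‖wienerShift (-(i : ℝ) * μ) ω s‖) '' Set.Icc (-μ) 0) ≤ C₀ + ε * i) :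
    ∀ κ > (0 : ℝ),
      Tendsto (fun r : ℝ =>
          Real.exp (-κ * r) * sSup ((fun s => ‖ω (-r + s)‖) '' Set.Icc (-μ) 0))
        atTop (nhds 0) :=
  subexponential_growth_of_sublinear_shifts_general μ hμ ω hcont hsub
end

section
/- Let λ > 0, ν ∈ (0,1), 0 < μ ≤ τ, and let g : [−μ,τ] → [0,∞) be continuous. Then sup_{s ∈ [−μ,0]} ∫_{0}^{τ+s} e^{−λ(τ+s−r)} (τ+s−r)^{ν−1} g(r) dr ≤ ∫_{0}^{τ} e^{−λ(τ−r)} (τ−r)^{ν−1} · ( sup_{σ ∈ [−μ,0]} g(r+σ) ) dr. -/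
/-!
Substituting `r = x + s` turns the integral for the shift `s ∈ [-μ, 0]` into
`∫_{-s}^{τ} k(τ - x) g(x + s) dx` with `k(t) = e^{-λt} t^{ν-1} ≥ 0`. Enlarging the domain to
`[0, τ]` and bounding `g(x + s)` by `sup_{σ ∈ [-μ, 0]} g(x + σ)` only increases it, and the
bound no longer depends on `s`. The right-hand integrand is integrable because this supremum
is continuous in `x` and the singular kernel is integrable for `ν > 0`.
-/

open MeasureTheory intervalIntegral Set

lemma intervalIntegrable_exp_mul_rpow (c : ℝ) {p : ℝ} (hp : -1 < p) (a b : ℝ) :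
    IntervalIntegrable (fun t => Real.exp (c * t) * t ^ p) volume a b :=
  (intervalIntegrable_rpow' hp).continuousOn_mul (by fun_prop)

lemma IntervalIntegrable.comp_sub_left_mul {k φ : ℝ → ℝ} {τ : ℝ}
    (hk : IntervalIntegrable k volume 0 τ) (hφ : ContinuousOn φ (uIcc 0 τ)) :
    IntervalIntegrable (fun x => k (τ - x) * φ x) volume 0 τ := by
  have hk' : IntervalIntegrable (fun x => k (τ - x)) volume 0 τ := by
    simpa using (hk.comp_sub_left τ).symm
  exact hk'.mul_continuousOn hφ

lemma continuousOn_sSup_image_add {g : ℝ → ℝ} {a b c d : ℝ}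
    (hg : ContinuousOn g (Icc (a + c) (b + d))) :
    ContinuousOn (fun x => sSup ((fun σ => g (x + σ)) '' Icc c d)) (Icc a b) := by
  rw [continuousOn_iff_continuous_domRestrict]
  have hjoint : Continuous fun p : Icc a b × Icc c d => g (p.1 + p.2) :=
    hg.comp_continuous (by fun_prop) fun p =>
      ⟨add_le_add p.1.2.1 p.2.2.1, add_le_add p.1.2.2 p.2.2.2⟩
  have hsup := isCompact_univ.continuous_sSup
    (f := fun (x : Icc a b) (σ : Icc c d) => g (x + σ)) hjoint
  refine hsup.congr fun x => ?_
  rw [image_univ, domRestrict_apply, image_eq_range]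

section DelayedConvolution

variable {k g : ℝ → ℝ} {τ : ℝ}

lemma integral_delayed_le_integral_shift (hk : IntervalIntegrable k volume 0 τ)
    (hk0 : ∀ t ∈ Icc 0 τ, 0 ≤ k t) {s : ℝ} (hs : s ∈ Icc (-τ) 0)
    (hg : ContinuousOn g (Icc s (τ + s))) (hg0 : ∀ r ∈ Icc s (τ + s), 0 ≤ g r) :
    ∫ r in (0 : ℝ)..τ + s, k (τ + s - r) * g r
      ≤ ∫ x in (0 : ℝ)..τ, k (τ - x) * g (x + s) := by
  have hsubst : ∫ r in (0 : ℝ)..τ + s, k (τ + s - r) * g r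
      = ∫ x in -s..τ, k (τ - x) * g (x + s) := by
    simpa only [neg_add_cancel, add_sub_add_right_eq_sub] using
      (integral_comp_add_right (fun r => k (τ + s - r) * g r) s (a := -s) (b := τ)).symm
  rw [hsubst]
  refine integral_mono_interval (by linarith [hs.2]) (by linarith [hs.1]) le_rfl ?_ ?_
  · filter_upwards [ae_restrict_mem measurableSet_Ioc] with x hx
    exact mul_nonneg (hk0 _ ⟨by linarith [hx.2], by linarith [hx.1]⟩)
      (hg0 _ ⟨by linarith [hx.1], by linarith [hx.2]⟩)
  · refine hk.comp_sub_left_mul (hg.comp (by fun_prop) fun x hx => ?_)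
    rw [uIcc_of_le (by linarith [hs.1, hs.2])] at hx
    exact ⟨by linarith [hx.1], by linarith [hx.2]⟩

theorem sSup_integral_delayed_le {μ : ℝ} (hμ : 0 ≤ μ) (hμτ : μ ≤ τ)
    (hk : IntervalIntegrable k volume 0 τ) (hk0 : ∀ t ∈ Icc 0 τ, 0 ≤ k t)
    (hg : ContinuousOn g (Icc (-μ) τ)) (hg0 : ∀ r ∈ Icc (-μ) τ, 0 ≤ g r) :
    sSup ((fun s => ∫ r in (0 : ℝ)..τ + s, k (τ + s - r) * g r) '' Icc (-μ) 0)
      ≤ ∫ r in (0 : ℝ)..τ, k (τ - r) * sSup ((fun σ => g (r + σ)) '' Icc (-μ) 0) := by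
  have hτ : 0 ≤ τ := hμ.trans hμτ
  have hgsup : ContinuousOn (fun x => sSup ((fun σ => g (x + σ)) '' Icc (-μ) 0)) (Icc 0 τ) :=
    continuousOn_sSup_image_add (by simpa using hg)
  refine csSup_le ((nonempty_Icc.2 (by linarith)).image _) ?_
  rintro _ ⟨s, hs, rfl⟩
  have hg_shift : ContinuousOn (fun x => g (x + s)) (uIcc 0 τ) := by
    rw [uIcc_of_le hτ]
    exact hg.comp (by fun_prop) fun x hx => ⟨by linarith [hx.1, hs.1], by linarith [hx.2, hs.2]⟩
  calc ∫ r in (0 : ℝ)..τ + s, k (τ + s - r) * g r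
      ≤ ∫ x in (0 : ℝ)..τ, k (τ - x) * g (x + s) :=
        integral_delayed_le_integral_shift hk hk0 ⟨by linarith [hs.1], hs.2⟩
          (hg.mono (Icc_subset_Icc (by linarith [hs.1]) (by linarith [hs.2]))) fun r hr =>
            hg0 r ⟨by linarith [hr.1, hs.1], by linarith [hr.2, hs.2]⟩
    _ ≤ ∫ x in (0 : ℝ)..τ, k (τ - x) * sSup ((fun σ => g (x + σ)) '' Icc (-μ) 0) := by
        refine integral_mono_on hτ (hk.comp_sub_left_mul hg_shift)
          (hk.comp_sub_left_mul (by rwa [uIcc_of_le hτ])) fun x hx => ?_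
        have hbdd : BddAbove ((fun σ => g (x + σ)) '' Icc (-μ) 0) :=
          isCompact_Icc.bddAbove_image (hg.comp (by fun_prop) fun σ hσ =>
            ⟨by linarith [hx.1, hσ.1], by linarith [hx.2, hσ.2]⟩)
        exact mul_le_mul_of_nonneg_left (le_csSup hbdd (mem_image_of_mem _ hs))
          (hk0 _ ⟨by linarith [hx.2], by linarith [hx.1]⟩)

end DelayedConvolution

theorem sup_singular_kernel_integral_le_general
    (lam ν μ τ : ℝ) (hν : ν ∈ Set.Ioo (0 : ℝ) 1)
    (hμ : 0 < μ) (hμτ : μ ≤ τ)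
    (g : ℝ → ℝ) (hg : ContinuousOn g (Set.Icc (-μ) τ))
    (hg0 : ∀ r ∈ Set.Icc (-μ) τ, 0 ≤ g r) :
    sSup ((fun s => ∫ r in (0 : ℝ)..(τ + s),
        Real.exp (-lam * (τ + s - r)) * (τ + s - r) ^ (ν - 1) * g r) '' Set.Icc (-μ) 0)
      ≤ ∫ r in (0 : ℝ)..τ,
          Real.exp (-lam * (τ - r)) * (τ - r) ^ (ν - 1) *
            sSup ((fun σ => g (r + σ)) '' Set.Icc (-μ) 0) :=
  sSup_integral_delayed_le (k := fun t => Real.exp (-lam * t) * t ^ (ν - 1)) hμ.le hμτ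
    (intervalIntegrable_exp_mul_rpow _ (by linarith [hν.1]) _ _)
    (fun t ht => mul_nonneg (Real.exp_pos _).le (Real.rpow_nonneg ht.1 _)) hg hg0

/-- For a nonnegative continuous `g` on `[−μ,τ]` and a singular exponential kernel,
`sup_{s∈[−μ,0]} ∫_0^{τ+s} e^{−λ(τ+s−r)} (τ+s−r)^{ν−1} g(r) dr
  ≤ ∫_0^τ e^{−λ(τ−r)} (τ−r)^{ν−1} sup_{σ∈[−μ,0]} g(r+σ) dr`. -/
theorem sup_singular_kernel_integral_le
    (lam ν μ τ : ℝ) (hlam : 0 < lam) (hν : ν ∈ Set.Ioo (0 : ℝ) 1)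
    (hμ : 0 < μ) (hμτ : μ ≤ τ)
    (g : ℝ → ℝ) (hg : ContinuousOn g (Set.Icc (-μ) τ))
    (hg0 : ∀ r ∈ Set.Icc (-μ) τ, 0 ≤ g r) :
    sSup ((fun s => ∫ r in (0 : ℝ)..(τ + s),
        Real.exp (-lam * (τ + s - r)) * (τ + s - r) ^ (ν - 1) * g r) '' Set.Icc (-μ) 0)
      ≤ ∫ r in (0 : ℝ)..τ,
          Real.exp (-lam * (τ - r)) * (τ - r) ^ (ν - 1) *
            sSup ((fun σ => g (r + σ)) '' Set.Icc (-μ) 0) :=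
  sup_singular_kernel_integral_le_general lam ν μ τ hν hμ hμτ g hg hg0
end
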